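/- arXiv:2605.03664 — 2 statements merged into one kernel-verified Lean document; each statement's English description precedes it below -/
import Mathlib

section
/- Let 0 < λ < 1 and 0 < q ≤ 1. For every integer u ≥ 1, F_{q,−λ}(u−1) − F_{q,−λ}(u) = −Σ_{m=1}^∞ ĥ_{qm−1}(u)·(−λ)^m, where the series on the right converges. (This is the probability mass function of the discrete Mittag-Leffler waiting time.) -/
/-!
By `Γ(x) = (x-1)Γ(x-1)` the coefficients obey the Pascal rule `ĥ_α(x-1) - ĥ_α(x) = -ĥ_{α-1}(x)`,
so for `u ≥ 2` the series defining `F(u-1)` and `F(u)` can be subtracted term by term; the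
`m = 0` term of the difference vanishes because `Γ(0) = 0`. For `u = 1` every `ĥ_α(1)` equals `1`
and both sides are geometric series. Convergence comes from
`ĥ_α(n+1) = (α+1)⋯(α+n)/n! ≤ (α+1+n)^n`, a polynomial bound in `α ≤ m`.
-/

/-- Generalized binomial coefficient `ĥ_α(x) = Γ(x+α)/(Γ(α+1)·Γ(x))`. -/
noncomputable def hhat (α x : ℝ) : ℝ :=
  Real.Gamma (x + α) / (Real.Gamma (α + 1) * Real.Gamma x)

/-- Discrete Mittag-Leffler function `F_{q,λ}(t) = Σ_m ĥ_{qm}(t)·λ^m`, with `F_{q,λ}(0) = 1`. -/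
noncomputable def dML (q lam : ℝ) (t : ℕ) : ℝ :=
  if t = 0 then 1 else ∑' m : ℕ, hhat (q * m) (t : ℝ) * lam ^ m

lemma Gamma_add_nat_eq_mul_prod {β : ℝ} (hβ : 0 < β) (n : ℕ) :
    Real.Gamma (β + n) = Real.Gamma β * ∏ j ∈ Finset.range n, (β + j) := by
  induction n with
  | zero => simp
  | succ n ih =>
    rw [Nat.cast_succ, ← add_assoc, Real.Gamma_add_one (by positivity), ih,
      Finset.prod_range_succ]
    ring

lemma hhat_nat_succ {α : ℝ} (hα : 0 < α + 1) (n : ℕ) :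
    hhat α (n + 1) = (∏ j ∈ Finset.range n, (α + 1 + j)) / n.factorial := by
  rw [hhat, show (n : ℝ) + 1 + α = α + 1 + n by ring, Gamma_add_nat_eq_mul_prod hα,
    Real.Gamma_nat_eq_factorial, mul_div_mul_left _ _ (Real.Gamma_pos_of_pos hα).ne']

lemma abs_hhat_nat_succ_le {α : ℝ} (hα : 0 < α + 1) (n : ℕ) :
    |hhat α (n + 1)| ≤ (α + 1 + n) ^ n := by
  have hprod : 0 ≤ ∏ j ∈ Finset.range n, (α + 1 + j) :=
    Finset.prod_nonneg fun j _ => by positivity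
  rw [hhat_nat_succ hα, abs_of_nonneg (by positivity)]
  calc (∏ j ∈ Finset.range n, (α + 1 + j)) / n.factorial
      ≤ ∏ j ∈ Finset.range n, (α + 1 + j) :=
        div_le_self hprod (by exact_mod_cast Nat.one_le_iff_ne_zero.2 n.factorial_ne_zero)
    _ ≤ ∏ _j ∈ Finset.range n, (α + 1 + n) := by
        refine Finset.prod_le_prod (fun j _ => by positivity) fun j hj => ?_
        have : (j : ℝ) ≤ n := by exact_mod_cast (Finset.mem_range.1 hj).le
        linarith
    _ = (α + 1 + n) ^ n := by rw [Finset.prod_const, Finset.card_range]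

lemma summable_hhat_mul_pow {r : ℝ} (hr : |r| < 1) {α : ℕ → ℝ} (hα : ∀ m, 0 < α m + 1)
    (hαm : ∀ m, α m ≤ m) (n : ℕ) :
    Summable fun m => hhat (α m) (n + 1) * r ^ m := by
  have hr' : ‖|r|‖ < 1 := by rwa [Real.norm_eq_abs, abs_abs]
  have hbound : Summable fun m : ℕ =>
      2 ^ (n - 1) * ((m : ℝ) ^ n * |r| ^ m + (n + 1) ^ n * |r| ^ m) :=
    ((summable_pow_mul_geometric_of_norm_lt_one n hr').add
      ((summable_geometric_of_abs_lt_one (by rwa [abs_abs])).mul_left _)).mul_left _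
  refine Summable.of_norm_bounded hbound fun m => ?_
  rw [Real.norm_eq_abs, abs_mul, abs_pow]
  calc |hhat (α m) (n + 1)| * |r| ^ m ≤ ((m : ℝ) + (n + 1)) ^ n * |r| ^ m := by
        gcongr
        refine (abs_hhat_nat_succ_le (hα m) n).trans (pow_le_pow_left₀ ?_ ?_ n)
        · linarith [hα m, n.cast_nonneg (α := ℝ)]
        · linarith [hαm m]
    _ ≤ 2 ^ (n - 1) * ((m : ℝ) ^ n + (n + 1) ^ n) * |r| ^ m := by
        gcongr
        exact add_pow_le (Nat.cast_nonneg m) (by positivity) n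
    _ = 2 ^ (n - 1) * ((m : ℝ) ^ n * |r| ^ m + (n + 1) ^ n * |r| ^ m) := by ring

lemma hhat_neg_one (x : ℝ) : hhat (-1) x = 0 := by
  rw [hhat, neg_add_cancel, Real.Gamma_zero, zero_mul, div_zero]

lemma hhat_one_right {α : ℝ} (hα : 0 < α + 1) : hhat α 1 = 1 := by
  rw [hhat, add_comm, Real.Gamma_one, mul_one, div_self (Real.Gamma_pos_of_pos hα).ne']

lemma hhat_zero_left {x : ℝ} (hx : 0 < x) : hhat 0 x = 1 := by
  rw [hhat, add_zero, zero_add, Real.Gamma_one, one_mul, div_self (Real.Gamma_pos_of_pos hx).ne']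

lemma hhat_sub_one_sub_hhat {α x : ℝ} (hα : 0 ≤ α) (hx : 1 < x) :
    hhat α (x - 1) - hhat α x = -hhat (α - 1) x := by
  rcases hα.eq_or_lt with rfl | hα
  · rw [hhat_zero_left (by linarith), hhat_zero_left (by linarith), zero_sub, hhat_neg_one]
    ring
  have hx1 : 0 < x - 1 := by linarith
  have hΓx : Real.Gamma x = (x - 1) * Real.Gamma (x - 1) := by
    simpa using Real.Gamma_add_one hx1.ne'
  have hΓxα : Real.Gamma (x + α) = (x - 1 + α) * Real.Gamma (x - 1 + α) := by
    rw [← Real.Gamma_add_one (by positivity)]; ring_nf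
  have hΓα : Real.Gamma (α + 1) = α * Real.Gamma α := Real.Gamma_add_one hα.ne'
  have := (Real.Gamma_pos_of_pos hx1).ne'
  have := (Real.Gamma_pos_of_pos hα).ne'
  simp only [hhat]
  rw [show x + (α - 1) = x - 1 + α by ring, sub_add_cancel, hΓxα, hΓα, hΓx]
  field_simp
  ring

lemma dML_sub_dML_succ {q r : ℝ} (hq0 : 0 < q) (hq1 : q ≤ 1) (hr : |r| < 1) (n : ℕ) :
    dML q r n - dML q r (n + 1) =
      -∑' m : ℕ, hhat (q * ((m : ℝ) + 1) - 1) ((n + 1 : ℕ) : ℝ) * r ^ (m + 1) := by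
  have hsum (t : ℕ) : Summable fun m : ℕ => hhat (q * m) (t + 1) * r ^ m :=
    summable_hhat_mul_pow hr (fun m => by positivity)
      (fun m => mul_le_of_le_one_left m.cast_nonneg hq1) t
  rcases n with _ | k
  · have hgeom := summable_geometric_of_abs_lt_one hr
    simp only [dML, if_true, Nat.zero_add, Nat.one_ne_zero, if_false, Nat.cast_one]
    have hF (m : ℕ) : hhat (q * m) 1 = 1 := hhat_one_right (by positivity)
    have hG (m : ℕ) : hhat (q * ((m : ℝ) + 1) - 1) 1 = 1 :=
      hhat_one_right (by rw [sub_add_cancel]; positivity)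
    simp only [hF, hG, one_mul]
    rw [hgeom.tsum_eq_zero_add]
    ring
  · have hpascal (m : ℕ) : hhat (q * m) (k + 1) * r ^ m - hhat (q * m) (k + 1 + 1) * r ^ m =
        -(hhat (q * m - 1) (k + 1 + 1) * r ^ m) := by
      have := hhat_sub_one_sub_hhat (α := q * m) (x := k + 1 + 1) (by positivity)
        (by linarith [k.cast_nonneg (α := ℝ)])
      rw [add_sub_cancel_right] at this
      rw [← sub_mul, this, neg_mul]
    have hF₂ : Summable fun m : ℕ => hhat (q * m) (k + 1 + 1) * r ^ m := by
      exact_mod_cast hsum (k + 1)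
    have hG : Summable fun m : ℕ => hhat (q * m - 1) (k + 1 + 1) * r ^ m := by
      simpa only [hpascal, neg_neg] using ((hsum k).sub hF₂).neg
    simp only [dML, Nat.add_one_ne_zero, if_false]
    push_cast
    rw [← (hsum k).tsum_sub hF₂, tsum_congr hpascal, tsum_neg, hG.tsum_eq_zero_add]
    simp [hhat_neg_one]

/-- Probability mass function of the discrete Mittag-Leffler waiting time: for `u ≥ 1`,
`F_{q,−λ}(u−1) − F_{q,−λ}(u) = −Σ_{m=1}^∞ ĥ_{qm−1}(u)·(−λ)^m`, where the series converges. -/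
theorem pmf_waiting_time (lam q : ℝ) (hlam0 : 0 < lam) (hlam1 : lam < 1)
    (hq0 : 0 < q) (hq1 : q ≤ 1) (u : ℕ) (hu : 1 ≤ u) :
    Summable (fun m : ℕ => hhat (q * ((m : ℝ) + 1) - 1) (u : ℝ) * (-lam) ^ (m + 1)) ∧
    dML q (-lam) (u - 1) - dML q (-lam) u =
      -∑' m : ℕ, hhat (q * ((m : ℝ) + 1) - 1) (u : ℝ) * (-lam) ^ (m + 1) := by
  obtain ⟨n, rfl⟩ := Nat.exists_eq_add_of_le' hu
  have hr : |-lam| < 1 := by rwa [abs_neg, abs_of_pos hlam0]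
  refine ⟨?_, dML_sub_dML_succ hq0 hq1 hr n⟩
  have hsum := summable_hhat_mul_pow hr (α := fun m => q * ((m : ℝ) + 1) - 1)
    (fun m => by simp only [sub_add_cancel]; positivity) (fun m => by nlinarith) n
  simpa only [pow_succ, ← mul_assoc, Nat.cast_succ] using hsum.mul_right (-lam)
end

section
/- Let 0 < q ≤ 1 and let λ be real with |λ| < 1. For every positive integer t, the series Σ_{m=0}^∞ ĥ_{qm}(t)·λ^m defining the discrete Mittag-Leffler function F_{q,λ}(t) is summable. -/
/-!
For `α ≥ 0` the recursion `Γ(s+1) = s Γ(s)` gives `ĥ_α(n+1) = ĥ_α(n) · (n+α)/n` and `ĥ_α(1) = 1`,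
and each factor `(n+α)/n` is at most `α+1`. Hence `ĥ_α(k+1) ≤ (α+1)^k`, so with `α = qm ≤ m`
the `m`-th term of the series is bounded by a polynomial in `m` times `|λ|^m`.
-/

open Filter

lemma hhat_nonneg {α x : ℝ} (hα : 0 ≤ α) (hx : 0 < x) : 0 ≤ hhat α x := by
  unfold hhat
  have := Real.Gamma_pos_of_pos (show 0 < x + α by linarith)
  have := Real.Gamma_pos_of_pos (show 0 < α + 1 by linarith)
  have := Real.Gamma_pos_of_pos hx
  positivity

lemma hhat_one {α : ℝ} (hα : -1 < α) : hhat α 1 = 1 := by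
  have : Real.Gamma (α + 1) ≠ 0 := (Real.Gamma_pos_of_pos (by linarith)).ne'
  rw [hhat, Real.Gamma_one, mul_one, add_comm, div_self this]

lemma hhat_add_one {α x : ℝ} (hx : x ≠ 0) (hxα : x + α ≠ 0) :
    hhat α (x + 1) = hhat α x * ((x + α) / x) := by
  rw [hhat, hhat, add_right_comm, Real.Gamma_add_one hxα, Real.Gamma_add_one hx]
  field_simp

lemma hhat_nat_add_one_le_pow {α : ℝ} (hα : 0 ≤ α) (k : ℕ) :
    hhat α (k + 1) ≤ (α + 1) ^ k := by
  induction k with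
  | zero => simp [hhat_one (show -1 < α by linarith)]
  | succ k ih =>
    have hk : (0 : ℝ) < k + 1 := by positivity
    have hfactor : ((k + 1 : ℝ) + α) / (k + 1) ≤ α + 1 := by
      rw [div_le_iff₀ hk]; nlinarith [k.cast_nonneg (α := ℝ)]
    push_cast
    rw [hhat_add_one hk.ne' (by positivity), pow_succ]
    exact mul_le_mul ih hfactor (by positivity) (by positivity)

/-- The series `Σ_m ĥ_{qm}(t)·λ^m` defining the discrete Mittag-Leffler function `F_{q,λ}(t)`
is summable for `0 < q ≤ 1`, `|λ| < 1`, and positive integers `t`. -/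
theorem dML_summable (q lam : ℝ) (hq0 : 0 < q) (hq1 : q ≤ 1) (hlam : |lam| < 1)
    (t : ℕ) (ht : 1 ≤ t) :
    Summable (fun m : ℕ => hhat (q * m) (t : ℝ) * lam ^ m) := by
  obtain ⟨k, rfl⟩ := Nat.exists_eq_add_of_le' ht
  have hgeom : Summable (fun m : ℕ => 2 ^ k * ((m : ℝ) ^ k * |lam| ^ m)) :=
    (summable_pow_mul_geometric_of_norm_lt_one (R := ℝ) k (by simpa using hlam)).mul_left _
  refine hgeom.of_norm_bounded_eventually_nat ?_
  filter_upwards [eventually_ge_atTop 1] with m hm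
  have hm : (1 : ℝ) ≤ m := by exact_mod_cast hm
  have hα : 0 ≤ q * m := by positivity
  have hqm : q * m + 1 ≤ 2 * m := by nlinarith
  calc ‖hhat (q * m) ((k + 1 : ℕ) : ℝ) * lam ^ m‖
      = hhat (q * m) ((k + 1 : ℕ) : ℝ) * |lam| ^ m := by
        rw [norm_mul, norm_pow, Real.norm_eq_abs, Real.norm_eq_abs,
          abs_of_nonneg (hhat_nonneg hα (by positivity))]
    _ ≤ (2 * m) ^ k * |lam| ^ m := by
        gcongr
        push_cast
        exact (hhat_nat_add_one_le_pow hα k).trans (pow_le_pow_left₀ (by positivity) hqm k)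
    _ = 2 ^ k * ((m : ℝ) ^ k * |lam| ^ m) := by ring
end
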